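/- Uniqueness of zero-average solutions: if ψ̃ : (0,π) → ℂ satisfies −sin θ ∂_θψ̃ + d [ (1/sin θ) ∂_θ(sin θ ∂_θψ̃) − ψ̃/sin²θ ] + iα sin θ ψ̃ = 0 on (0,π) with ψ̃ in the natural weighted H¹ space (with weight e^{(cos θ)/d} sin θ and the singular weight 1/sin²θ for the zeroth-order term), then ψ̃ = 0; consequently the equation with right-hand side sin θ has at most one such solution. -/

import Mathlib

open MeasureTheory Real Set Filter Topology
open scoped Interval InnerProductSpace

/-!
Suppose `ψ θ₀ ≠ 0`. Since `1 / sin θ` is not integrable at `0` nor at `π`, the integrability of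
`‖ψ‖² / sin θ` (the singular part of the weighted norm) forces `‖ψ‖²` to drop below `‖ψ θ₀‖²` on
both sides of `θ₀`, so `‖ψ‖²` has an interior local maximum `c`. There `⟪ψ, ψ'⟫ = 0`, and pairing
the equation with `ψ` kills the drift term and the skew term `iα sin θ ψ`, leaving
`⟪ψ, ψ''⟫ = ‖ψ‖² / sin² c`. Hence `(‖ψ‖²)'' = 2 (‖ψ'‖² + ‖ψ‖² / sin² c) > 0` at a local maximum,
which is absurd.
-/

theorem integrableOn_norm_sq_mul_inv_sin {E : Type*} [NormedAddCommGroup E] [NormedSpace ℝ E]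
    {d : ℝ} {ψ : ℝ → E} (hd : 0 < d) (hψ : ContinuousOn ψ (Ioo 0 π))
    (hV : IntegrableOn
      (fun θ => (‖deriv ψ θ‖ ^ 2 + ‖ψ θ‖ ^ 2 / sin θ ^ 2) * exp (cos θ / d) * sin θ)
      (Ioo 0 π)) :
    IntegrableOn (fun θ => ‖ψ θ‖ ^ 2 * (sin θ)⁻¹) (Ioo 0 π) := by
  have hsin : ∀ θ ∈ Ioo 0 π, 0 < sin θ := fun θ hθ => sin_pos_of_pos_of_lt_pi hθ.1 hθ.2
  have hmeas : ContinuousOn (fun θ => ‖ψ θ‖ ^ 2 * (sin θ)⁻¹) (Ioo 0 π) :=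
    (hψ.norm.pow 2).mul (continuousOn_sin.inv₀ fun θ hθ => (hsin θ hθ).ne')
  refine (hV.const_mul (exp (1 / d))).mono' (hmeas.aestronglyMeasurable measurableSet_Ioo) ?_
  refine (ae_restrict_iff' measurableSet_Ioo).2 (ae_of_all _ fun θ hθ => ?_)
  have hs := hsin θ hθ
  have hexp : 1 ≤ exp (1 / d) * exp (cos θ / d) := by
    rw [← exp_add, one_le_exp_iff, ← add_div]
    exact div_nonneg (by linarith [neg_one_le_cos θ]) hd.le
  rw [norm_of_nonneg (by positivity)]
  calc ‖ψ θ‖ ^ 2 * (sin θ)⁻¹ = ‖ψ θ‖ ^ 2 / sin θ ^ 2 * sin θ := by field_simp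
    _ ≤ (‖deriv ψ θ‖ ^ 2 + ‖ψ θ‖ ^ 2 / sin θ ^ 2) * sin θ * (exp (1 / d) * exp (cos θ / d)) := by
      refine le_mul_of_one_le_right (by positivity) hexp |>.trans' ?_
      gcongr
      exact le_add_of_nonneg_left (by positivity)
    _ = _ := by ring

theorem exists_lt_of_integrableOn_mul {α : Type*} [MeasurableSpace α] {μ : Measure α}
    {f g : α → ℝ} {s : Set α} {m : ℝ} (hm : 0 < m) (hs : MeasurableSet s)
    (hg : AEStronglyMeasurable g (μ.restrict s)) (hg₀ : ∀ x ∈ s, 0 ≤ g x)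
    (hgi : ¬IntegrableOn g s μ) (hfg : IntegrableOn (fun x => f x * g x) s μ) :
    ∃ x ∈ s, f x < m := by
  by_contra! hf
  refine hgi ((hfg.const_mul m⁻¹).mono' hg ((ae_restrict_iff' hs).2 (ae_of_all _ fun x hx => ?_)))
  rw [norm_of_nonneg (hg₀ x hx), le_inv_mul_iff₀ hm]
  exact mul_le_mul_of_nonneg_right (hf x hx) (hg₀ x hx)

theorem not_intervalIntegrable_inv_sin {a b c : ℝ} (hc : sin c = 0) (hne : a ≠ b)
    (hcab : c ∈ [[a, b]]) : ¬IntervalIntegrable (fun x => (sin x)⁻¹) volume a b := by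
  have hcos : cos c ≠ 0 := by
    intro h0
    simpa [hc, h0] using sin_sq_add_cos_sq c
  refine not_intervalIntegrable_of_sub_inv_isBigO_punctured (Asymptotics.IsBigO.of_bound' ?_)
    hne hcab
  filter_upwards [(hasDerivAt_sin c).eventually_ne (c := 0) hcos] with x hx
  have := abs_sin_sub_sin_le x c
  rw [hc, sub_zero] at this
  simp only [norm_inv, Real.norm_eq_abs]
  exact inv_anti₀ (abs_pos.2 hx) this

theorem exists_lt_of_integrableOn_mul_inv_sin {f : ℝ → ℝ} {a b c m : ℝ} (hm : 0 < m)
    (hab : a < b) (hc : sin c = 0) (hcab : c ∈ Icc a b) (hsin : ∀ x ∈ Ioo a b, 0 ≤ sin x)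
    (hf : IntegrableOn (fun x => f x * (sin x)⁻¹) (Ioo a b)) : ∃ x ∈ Ioo a b, f x < m := by
  refine exists_lt_of_integrableOn_mul hm measurableSet_Ioo
    measurable_sin.inv.aestronglyMeasurable (fun x hx => inv_nonneg.2 (hsin x hx)) ?_ hf
  rw [← intervalIntegrable_iff_integrableOn_Ioo_of_le hab.le]
  exact not_intervalIntegrable_inv_sin hc hab.ne (Icc_subset_uIcc hcab)

theorem exists_mem_Ioo_isLocalMax_le {f : ℝ → ℝ} {a b z : ℝ} (hf : ContinuousOn f (Icc a b))
    (hz : z ∈ Icc a b) (ha : f a < f z) (hb : f b < f z) :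
    ∃ c ∈ Ioo a b, IsLocalMax f c ∧ f z ≤ f c := by
  have hends : ∀ y ∈ Icc a b \ Ioo a b, f y < f z := by
    rw [Icc_sdiff_Ioo_same (hz.1.trans hz.2)]
    rintro y (rfl | rfl) <;> assumption
  obtain ⟨c, hc, hmax⟩ := isCompact_Icc.exists_isMaxOn_mem_subset hf hz hends
  exact ⟨c, hc, hmax.isLocalMax (Icc_mem_nhds hc.1 hc.2), hmax hz⟩

theorem exists_isLocalMax_of_integrableOn_mul_inv_sin {f : ℝ → ℝ} {θ₀ : ℝ}
    (hf : ContinuousOn f (Ioo 0 π)) (hint : IntegrableOn (fun θ => f θ * (sin θ)⁻¹) (Ioo 0 π))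
    (hθ₀ : θ₀ ∈ Ioo 0 π) (hpos : 0 < f θ₀) : ∃ c ∈ Ioo 0 π, IsLocalMax f c ∧ f θ₀ ≤ f c := by
  have hsin : ∀ θ ∈ Ioo 0 π, 0 ≤ sin θ := fun θ hθ => (sin_pos_of_pos_of_lt_pi hθ.1 hθ.2).le
  obtain ⟨a, ha, hfa⟩ := exists_lt_of_integrableOn_mul_inv_sin hpos hθ₀.1 sin_zero
    (left_mem_Icc.2 hθ₀.1.le) (fun x hx => hsin x ⟨hx.1, hx.2.trans hθ₀.2⟩)
    (hint.mono_set (Ioo_subset_Ioo_right hθ₀.2.le))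
  obtain ⟨b, hb, hfb⟩ := exists_lt_of_integrableOn_mul_inv_sin hpos hθ₀.2 sin_pi
    (right_mem_Icc.2 hθ₀.2.le) (fun x hx => hsin x ⟨hθ₀.1.trans hx.1, hx.2⟩)
    (hint.mono_set (Ioo_subset_Ioo_left hθ₀.1.le))
  have habπ : Icc a b ⊆ Ioo 0 π := Icc_subset_Ioo ha.1 hb.2
  obtain ⟨c, hc, hmax, hle⟩ := exists_mem_Ioo_isLocalMax_le (hf.mono habπ) ⟨ha.2.le, hb.1.le⟩
    hfa hfb
  exact ⟨c, habπ (Ioo_subset_Icc_self hc), hmax, hle⟩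

theorem ContDiffOn.differentiableAt_deriv {F : Type*} [NormedAddCommGroup F] [NormedSpace ℝ F]
    {f : ℝ → F} {U : Set ℝ} {x : ℝ} (hf : ContDiffOn ℝ 2 f U) (hU : IsOpen U) (hx : x ∈ U) :
    DifferentiableAt ℝ (deriv f) x :=
  ((hf.deriv_of_isOpen hU (m := 1) (by norm_num)).differentiableOn one_ne_zero).differentiableAt
    (hU.mem_nhds hx)

section NormSq

variable {E : Type*} [NormedAddCommGroup E] [InnerProductSpace ℝ E] {ψ : ℝ → E} {x : ℝ}

theorem deriv_norm_sq (hψ : DifferentiableAt ℝ ψ x) :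
    deriv (fun t => ‖ψ t‖ ^ 2) x = 2 * ⟪ψ x, deriv ψ x⟫_ℝ :=
  hψ.hasDerivAt.norm_sq.deriv

theorem deriv_deriv_norm_sq (hψ : ∀ᶠ y in 𝓝 x, DifferentiableAt ℝ ψ y)
    (hψ' : DifferentiableAt ℝ (deriv ψ) x) :
    deriv (deriv fun t => ‖ψ t‖ ^ 2) x
      = 2 * (‖deriv ψ x‖ ^ 2 + ⟪ψ x, deriv (deriv ψ) x⟫_ℝ) := by
  have hfirst : deriv (fun t => ‖ψ t‖ ^ 2) =ᶠ[𝓝 x] fun t => 2 * ⟪ψ t, deriv ψ t⟫_ℝ := by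
    filter_upwards [hψ] with y hy using deriv_norm_sq hy
  rw [hfirst.deriv_eq, ((hψ.self_of_nhds.hasDerivAt.inner ℝ hψ'.hasDerivAt).const_mul 2).deriv,
    real_inner_self_eq_norm_sq]
  ring

end NormSq

theorem inner_eq_norm_sq_div_of_gci_eq {s c d α : ℝ} {z z' z'' : ℂ} (hs : s ≠ 0) (hd : d ≠ 0)
    (h : -(s : ℂ) * z' + d * ((1 / s) * (c * z' + s * z'') - z / s ^ 2)
      + Complex.I * α * s * z = 0)
    (hcrit : ⟪z, z'⟫_ℝ = 0) : ⟪z, z''⟫_ℝ = ‖z‖ ^ 2 / s ^ 2 := by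
  have hs' : (s : ℂ) ≠ 0 := by exact_mod_cast hs
  rw [eq_div_iff (pow_ne_zero 2 hs)]
  simp only [Complex.inner, Complex.sq_norm, Complex.normSq_apply, Complex.mul_re,
    Complex.conj_re, Complex.conj_im] at hcrit ⊢
  field_simp at h
  have hre := congrArg Complex.re h
  have him := congrArg Complex.im h
  simp only [pow_succ, pow_zero, Complex.add_re, Complex.add_im, Complex.sub_re, Complex.sub_im,
    Complex.neg_re, Complex.neg_im, Complex.mul_re, Complex.mul_im, Complex.ofReal_re,
    Complex.ofReal_im, Complex.I_re, Complex.I_im, Complex.one_re, Complex.one_im, Complex.zero_re,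
    Complex.zero_im] at hre him
  refine mul_left_cancel₀ hd ?_
  linear_combination z.re * hre + z.im * him + (s ^ 3 - d * s * c) * hcrit

theorem inner_deriv_deriv_eq_of_gci {d α θ : ℝ} {ψ : ℝ → ℂ} (hd : d ≠ 0) (hθ : sin θ ≠ 0)
    (hψ' : DifferentiableAt ℝ (deriv ψ) θ)
    (heq : -(sin θ : ℂ) * deriv ψ θ
          + (d : ℂ) * ((1 / (sin θ : ℂ)) * deriv (fun t => (sin t : ℂ) * deriv ψ t) θ
            - ψ θ / (sin θ : ℂ) ^ 2)
          + Complex.I * (α : ℂ) * (sin θ : ℂ) * ψ θ = 0)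
    (hcrit : ⟪ψ θ, deriv ψ θ⟫_ℝ = 0) :
    ⟪ψ θ, deriv (deriv ψ) θ⟫_ℝ = ‖ψ θ‖ ^ 2 / sin θ ^ 2 := by
  have hprod : deriv (fun t => (sin t : ℂ) * deriv ψ t) θ
      = cos θ * deriv ψ θ + sin θ * deriv (deriv ψ) θ :=
    ((hasDerivAt_sin θ).ofReal_comp.mul hψ'.hasDerivAt).deriv
  rw [hprod] at heq
  exact inner_eq_norm_sq_div_of_gci_eq hθ hd heq hcrit

theorem IsLocalMax.deriv_deriv_nonpos {f : ℝ → ℝ} {x : ℝ} (h : IsLocalMax f x)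
    (hc : ContinuousAt f x) : deriv (deriv f) x ≤ 0 := by
  by_contra! hpos
  have hconst : f =ᶠ[𝓝 x] fun _ => f x := by
    filter_upwards [h, isLocalMin_of_deriv_deriv_pos hpos h.deriv_eq_zero hc] with y h1 h2
    exact le_antisymm h1 h2
  have hderiv : deriv f =ᶠ[𝓝 x] fun _ => 0 := by
    filter_upwards [hconst.eventuallyEq_nhds] with y hy
    rw [hy.deriv_eq, deriv_const]
  rw [hderiv.deriv_eq, deriv_const] at hpos
  exact hpos.false

/-- Uniqueness of zero solutions for the GCI elliptic equation: any solution of the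
    homogeneous equation
    −sin θ ψ' + d[(1/sin θ)(sin θ ψ')' − ψ/sin²θ] + iα sin θ ψ = 0 on (0,π)
    belonging to the weighted H¹ space vanishes; consequently the equation with
    right-hand side sin θ has at most one such solution. -/
theorem gci_uniqueness (d α : ℝ) (hd : 0 < d) (ψ : ℝ → ℂ)
    (hψ : ContDiffOn ℝ 2 ψ (Set.Ioo 0 Real.pi))
    (hV : IntegrableOn
      (fun θ => (‖deriv ψ θ‖ ^ 2 + ‖ψ θ‖ ^ 2 / Real.sin θ ^ 2)
        * Real.exp (Real.cos θ / d) * Real.sin θ) (Set.Ioo 0 Real.pi))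
    (heq : ∀ θ ∈ Set.Ioo 0 Real.pi,
      -(Real.sin θ : ℂ) * deriv ψ θ
          + (d : ℂ) * ((1 / (Real.sin θ : ℂ))
              * deriv (fun t => (Real.sin t : ℂ) * deriv ψ t) θ
            - ψ θ / (Real.sin θ : ℂ) ^ 2)
          + Complex.I * (α : ℂ) * (Real.sin θ : ℂ) * ψ θ = 0) :
    ∀ θ ∈ Set.Ioo 0 Real.pi, ψ θ = 0 := by
  intro θ₀ hθ₀
  by_contra hne
  have hm : 0 < ‖ψ θ₀‖ ^ 2 := by positivity
  have hcont : ContinuousOn (fun t => ‖ψ t‖ ^ 2) (Ioo 0 π) := hψ.continuousOn.norm.pow 2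
  obtain ⟨c, hcπ, hmax, hle⟩ := exists_isLocalMax_of_integrableOn_mul_inv_sin hcont
    (integrableOn_norm_sq_mul_inv_sin hd hψ.continuousOn hV) hθ₀ hm
  have hsin : 0 < sin c := sin_pos_of_pos_of_lt_pi hcπ.1 hcπ.2
  have hdiff : ∀ᶠ y in 𝓝 c, DifferentiableAt ℝ ψ y := by
    filter_upwards [isOpen_Ioo.mem_nhds hcπ] with y hy
    exact (hψ.differentiableOn (by norm_num)).differentiableAt (isOpen_Ioo.mem_nhds hy)
  have hdiff' := hψ.differentiableAt_deriv isOpen_Ioo hcπ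
  have hcrit : ⟪ψ c, deriv ψ c⟫_ℝ = 0 := by
    simpa [deriv_norm_sq hdiff.self_of_nhds] using hmax.deriv_eq_zero
  have hsecond := hmax.deriv_deriv_nonpos (hcont.continuousAt (isOpen_Ioo.mem_nhds hcπ))
  rw [deriv_deriv_norm_sq hdiff hdiff',
    inner_deriv_deriv_eq_of_gci hd.ne' hsin.ne' hdiff' (heq c hcπ) hcrit] at hsecond
  have : 0 < ‖ψ c‖ ^ 2 / sin c ^ 2 := div_pos (hm.trans_le hle) (by positivity)
  nlinarith [sq_nonneg ‖deriv ψ c‖]
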